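/- arXiv:1404.6898 — 2 statements merged into one kernel-verified Lean document; each statement's English description precedes it below -/
import Mathlib

section
/- Fix integers N ≥ 4 and k with 1 ≤ k ≤ N. Then ‖ψ₃ − ψ₄‖² = 2(N−k)/(N−1) and ‖Π̂(ψ₃ − ψ₄)‖² = 2·C(N−4, k−3)/C(N−1, k−1), where C(n,r) denotes the binomial coefficient (equal to 0 when r < 0 or r > n). -/
/-!
On a string `z`, `ψ_a - ψ_b` takes the value `0` if `z_a = z_b` and `± C(N-1,k-1)^{-1/2}`
otherwise, so both squared norms are counts of weight-`k` strings with prescribed coordinates,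
divided by `C(N-1,k-1)`. The strings that are `1` on `F` and `0` on a disjoint `G` correspond to
the `(k - |F|)`-subsets of the remaining `N - |F| - |G|` coordinates.
-/

/-- The set `D` of strings `z ∈ {0,1}^N` of Hamming weight `k`. -/
abbrev DSet (N k : ℕ) : Type :=
  {z : Fin N → Bool // (Finset.univ.filter fun x => z x = true).card = k}

/-- The unit vector `ψ_x ∈ ℂ^D` with `ψ_x(z) = C(N−1,k−1)^{−1/2}` if `z_x = 1` and `0` else. -/
noncomputable def psi (N k : ℕ) (x : Fin N) : EuclideanSpace ℂ (DSet N k) :=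
  WithLp.toLp 2 (fun z => if z.val x = true then ((Real.sqrt ((N - 1).choose (k - 1)) : ℝ)⁻¹ : ℂ) else 0)

/-- The orthogonal projection `Π̂` of `ℂ^D` onto the span of the standard basis vectors `e_z`
with `z₁ = z₂ = 1`. -/
noncomputable def projHat (N k : ℕ) (hN : 2 ≤ N)
    (v : EuclideanSpace ℂ (DSet N k)) : EuclideanSpace ℂ (DSet N k) :=
  WithLp.toLp 2 (fun z => if z.val ⟨0, by omega⟩ = true ∧ z.val ⟨1, by omega⟩ = true then v z else 0)

open Finset

namespace DSet

variable {N k : ℕ}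

def ones (z : DSet N k) : Finset (Fin N) := {x | z.val x = true}

@[simp]
lemma mem_ones {z : DSet N k} {x : Fin N} : x ∈ z.ones ↔ z.val x = true := by
  simp [ones]

lemma card_ones (z : DSet N k) : #z.ones = k := z.prop

lemma ones_injective : Function.Injective (ones : DSet N k → Finset (Fin N)) := by
  intro z w h
  ext x : 2
  simpa using congr(x ∈ $h)

lemma card_filter_ones (P : Finset (Fin N) → Prop) [DecidablePred P] :
    #{z : DSet N k | P z.ones} = #{s ∈ powersetCard k univ | P s} := by
  refine card_bij (fun z _ => z.ones) (fun z hz => ?_) (fun z _ w _ h => ones_injective h)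
    (fun s hs => ?_)
  · simp_all [mem_powersetCard, card_ones]
  · rw [mem_filter, mem_powersetCard] at hs
    let z : DSet N k := ⟨fun x => decide (x ∈ s), by simpa using hs.1.2⟩
    have hz : z.ones = s := by ext x; simp [z]
    exact ⟨z, by simpa [hz] using hs.2, hz⟩

lemma card_filter_subset_ones_disjoint {F G : Finset (Fin N)} (hFG : Disjoint F G) :
    #{z : DSet N k | F ⊆ z.ones ∧ Disjoint z.ones G}
      = if #F ≤ k then (N - #G - #F).choose (k - #F) else 0 := by
  rw [card_filter_ones fun s => F ⊆ s ∧ Disjoint s G]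
  split_ifs with hF
  · have hG : {s ∈ powersetCard k (univ : Finset (Fin N)) | F ⊆ s ∧ Disjoint s G}
        = {s ∈ powersetCard k Gᶜ | F ⊆ s} := by
      ext s
      simp only [mem_filter, mem_powersetCard, subset_compl_iff_disjoint_right, subset_univ]
      tauto
    rw [hG, card_filter_powersetCard_subset F Gᶜ k (subset_compl_iff_disjoint_right.2 hFG) hF,
      card_compl, Fintype.card_fin]
  · refine card_eq_zero.2 (filter_eq_empty_iff.2 fun s hs hFs => hF ?_)
    exact (card_le_card hFs.1).trans (mem_powersetCard.1 hs).2.le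

lemma card_filter_subset_ones_ne {F : Finset (Fin N)} {a b : Fin N} (ha : a ∉ F) (hb : b ∉ F)
    (hab : a ≠ b) :
    #{z : DSet N k | F ⊆ z.ones ∧ z.val a ≠ z.val b}
      = 2 * if #F < k then (N - #F - 2).choose (k - #F - 1) else 0 := by
  have hsplit : ({z | F ⊆ z.ones ∧ z.val a ≠ z.val b} : Finset (DSet N k))
      = ({z | insert a F ⊆ z.ones ∧ Disjoint z.ones {b}} : Finset (DSet N k))
        ∪ ({z | insert b F ⊆ z.ones ∧ Disjoint z.ones {a}} : Finset (DSet N k)) := by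
    ext z
    simp only [mem_filter, mem_union, mem_univ, true_and, insert_subset_iff, mem_ones,
      disjoint_singleton_right]
    generalize z.val a = p, z.val b = q
    cases p <;> cases q <;> simp
  have hdisj : Disjoint ({z | insert a F ⊆ z.ones ∧ Disjoint z.ones {b}} : Finset (DSet N k))
      ({z | insert b F ⊆ z.ones ∧ Disjoint z.ones {a}} : Finset (DSet N k)) := by
    refine disjoint_filter.2 fun z _ h₁ h₂ => ?_
    exact disjoint_singleton_right.1 h₂.2 (h₁.1 (mem_insert_self a F))
  rw [hsplit, card_union_of_disjoint hdisj,
    card_filter_subset_ones_disjoint (disjoint_singleton_right.2 (by simpa [hb] using hab.symm)),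
    card_filter_subset_ones_disjoint (disjoint_singleton_right.2 (by simpa [ha] using hab)),
    card_insert_of_notMem ha, card_insert_of_notMem hb, card_singleton, card_singleton, two_mul]
  simp only [Nat.add_one_le_iff, show N - 1 - (#F + 1) = N - #F - 2 by omega, Nat.sub_sub k]

lemma card_filter_val_ne {a b : Fin N} (hab : a ≠ b) (hk : 0 < k) :
    #{z : DSet N k | z.val a ≠ z.val b} = 2 * (N - 2).choose (k - 1) := by
  simpa [hk] using card_filter_subset_ones_ne (k := k) (notMem_empty a) (notMem_empty b) hab

end DSet

section
variable {N k : ℕ}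

lemma norm_sq_psi_sub_psi_apply (a b : Fin N) (z : DSet N k) :
    ‖(psi N k a - psi N k b) z‖ ^ 2
      = if z.val a ≠ z.val b then (((N - 1).choose (k - 1) : ℕ) : ℝ)⁻¹ else 0 := by
  simp only [psi, PiLp.sub_apply]
  generalize z.val a = p, z.val b = q
  cases p <;> cases q <;> simp

lemma norm_sq_psi_sub_psi {a b : Fin N} (hab : a ≠ b) (hk : 1 ≤ k) (hkN : k ≤ N) :
    ‖psi N k a - psi N k b‖ ^ 2 = 2 * ((N : ℝ) - k) / ((N : ℝ) - 1) := by
  have hN : 2 ≤ N := by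
    have := Fin.val_ne_of_ne hab
    omega
  have hB : (((N - 1).choose (k - 1) : ℕ) : ℝ) ≠ 0 := by
    exact_mod_cast (Nat.choose_pos (by omega)).ne'
  have hN1 : ((N - 1 : ℕ) : ℝ) ≠ 0 := by exact_mod_cast (by omega : N - 1 ≠ 0)
  have hchoose : (N - 2).choose (k - 1) * (N - 1) = (N - 1).choose (k - 1) * (N - k) := by
    simpa [show N - 2 + 1 = N - 1 by omega, show N - 1 - (k - 1) = N - k by omega]
      using Nat.choose_mul_succ_eq (N - 2) (k - 1)
  simp_rw [EuclideanSpace.norm_sq_eq, norm_sq_psi_sub_psi_apply, sum_ite, sum_const_zero,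
    add_zero, sum_const, nsmul_eq_mul, DSet.card_filter_val_ne hab hk]
  rw [← Nat.cast_sub hkN, ← Nat.cast_pred (by omega), ← div_eq_mul_inv, div_eq_div_iff hB hN1]
  exact_mod_cast (by rw [mul_assoc, hchoose]; ring :
    2 * (N - 2).choose (k - 1) * (N - 1) = 2 * (N - k) * (N - 1).choose (k - 1))

lemma norm_sq_projHat_psi_sub_psi (hN : 2 ≤ N) {a b : Fin N} (ha : 2 ≤ (a : ℕ))
    (hb : 2 ≤ (b : ℕ)) (hab : a ≠ b) :
    ‖projHat N k hN (psi N k a - psi N k b)‖ ^ 2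
      = 2 * (if 3 ≤ k then (((N - 4).choose (k - 3) : ℕ) : ℝ) else 0) /
          (((N - 1).choose (k - 1) : ℕ) : ℝ) := by
  set F : Finset (Fin N) := {⟨0, by omega⟩, ⟨1, by omega⟩}
  have hF : #F = 2 := card_pair (by simp)
  have hP (z : DSet N k) :
      z.val ⟨0, by omega⟩ = true ∧ z.val ⟨1, by omega⟩ = true ↔ F ⊆ z.ones := by
    simp [F, insert_subset_iff]
  have hcount := DSet.card_filter_subset_ones_ne (k := k) (F := F) (a := a) (b := b)
    (by simp [F, Fin.ext_iff]; omega) (by simp [F, Fin.ext_iff]; omega) hab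
  simp only [EuclideanSpace.norm_sq_eq, projHat, apply_ite (‖·‖ ^ 2),
    norm_sq_psi_sub_psi_apply, norm_zero, zero_pow two_ne_zero, ← ite_and, sum_ite,
    sum_const_zero, add_zero, sum_const, nsmul_eq_mul, hP]
  rw [hcount, hF]
  simp only [Nat.sub_sub, show 2 < k ↔ 3 ≤ k from Iff.rfl]
  push_cast
  ring

end

theorem stmt13 (N k : ℕ) (hN : 4 ≤ N) (hk1 : 1 ≤ k) (hkN : k ≤ N) :
    ‖psi N k ⟨2, by omega⟩ - psi N k ⟨3, by omega⟩‖ ^ 2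
        = 2 * ((N : ℝ) - k) / ((N : ℝ) - 1)
      ∧ ‖projHat N k (by omega) (psi N k ⟨2, by omega⟩ - psi N k ⟨3, by omega⟩)‖ ^ 2
        = 2 * (if 3 ≤ k then (((N - 4).choose (k - 3) : ℕ) : ℝ) else 0) /
            (((N - 1).choose (k - 1) : ℕ) : ℝ) :=
  ⟨norm_sq_psi_sub_psi (by simp) hk1 hkN,
    norm_sq_projHat_psi_sub_psi _ le_rfl (by simp) (by simp)⟩
end

section
/- Fix integers N ≥ 3 and k with 2 ≤ k ≤ N. Then for all complex numbers α and β: ‖Π̂(α(ψ₁ + ψ₂) + β Σ_{x=3}^{N} ψ_x)‖² = ((k−1)/(N−1)) · |2α + (k−2)β|². -/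
/-!
On a string `z` with `z₁ = z₂ = 1` each `ψ_x` with `z_x = 1` contributes `C(N−1,k−1)^{−1/2}`, and
exactly `k − 2` of the indices `x ≥ 3` have `z_x = 1`. So the projected vector is constant, equal to
`(2α + (k−2)β) C(N−1,k−1)^{−1/2}`, on the `C(N−2,k−2)` such strings and vanishes elsewhere; the
identity `(N−1) C(N−2,k−2) = (k−1) C(N−1,k−1)` finishes the computation.
-/

open Finset

section WeightCount

variable {α : Type*} [Fintype α] [DecidableEq α]

theorem card_filter_compl_add_card_of_forall_true {z : α → Bool} {s : Finset α}
    (hs : ∀ x ∈ s, z x = true) : #{x ∈ sᶜ | z x = true} + #s = #{x | z x = true} := by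
  have hsub : s ⊆ ({x | z x = true} : Finset α) := fun x hx => by simpa using hs x hx
  rw [← card_sdiff_add_card_eq_card hsub]
  congr 2
  ext x
  simp [and_comm]

theorem card_weight_filter_forall_true (s : Finset α) {k : ℕ} (hs : #s ≤ k) :
    #{z : {z : α → Bool // #{x | z x = true} = k} | ∀ x ∈ s, z.1 x = true}
      = (Fintype.card α - #s).choose (k - #s) := by
  rw [← card_univ, ← card_filter_powersetCard_subset s univ k (subset_univ s) hs]
  refine card_bij (fun z _ => ({x | z.1 x = true} : Finset α)) ?_ ?_ ?_
  · intro z hz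
    simp only [mem_filter, mem_univ, true_and] at hz
    simp only [mem_filter, mem_powersetCard_univ]
    exact ⟨z.2, fun x hx => by simpa using hz x hx⟩
  · intro z _ w _ h
    ext x
    simpa using congrArg (x ∈ ·) h
  · intro t ht
    simp only [mem_filter, mem_powersetCard_univ] at ht
    exact ⟨⟨fun x => decide (x ∈ t), by simpa using ht.1⟩,
      by simpa using fun x hx => ht.2 hx, by ext; simp⟩

end WeightCount

theorem EuclideanSpace.norm_sq_toLp_ite {𝕜 ι : Type*} [RCLike 𝕜] [Fintype ι] (p : ι → Prop)
    [DecidablePred p] (a : 𝕜) :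
    ‖WithLp.toLp 2 (fun i => if p i then a else 0)‖ ^ 2 = #{i | p i} * ‖a‖ ^ 2 := by
  rw [EuclideanSpace.norm_sq_eq]
  simp [apply_ite, sum_ite]

theorem Nat.cast_choose_div_choose_add_one {n r : ℕ} (h : r ≤ n) :
    (n.choose r : ℝ) / (n + 1).choose (r + 1) = (r + 1) / (n + 1) := by
  have hpos : ((n + 1).choose (r + 1) : ℝ) ≠ 0 := by
    exact_mod_cast (Nat.choose_pos (by omega)).ne'
  rw [div_eq_div_iff hpos (by positivity)]
  have key : ((n + 1) * n.choose r : ℝ) = (n + 1).choose (r + 1) * (r + 1) := by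
    exact_mod_cast Nat.add_one_mul_choose_eq n r
  linear_combination key

section Psi

variable {N k : ℕ}

theorem sum_psi_apply (s : Finset (Fin N)) (z : DSet N k) :
    (∑ x ∈ s, psi N k x) z = #{x ∈ s | z.1 x = true} * ((√((N - 1).choose (k - 1)))⁻¹ : ℝ) := by
  rw [WithLp.ofLp_sum, Finset.sum_apply]
  simp [psi, sum_ite]

theorem card_pair_zero_one (hN : 2 ≤ N) :
    #({⟨0, by omega⟩, ⟨1, by omega⟩} : Finset (Fin N)) = 2 :=
  card_pair (by simp [Fin.ext_iff])

theorem filter_two_le_eq_compl_pair (hN : 2 ≤ N) :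
    ({x : Fin N | 2 ≤ (x : ℕ)} : Finset (Fin N)) = {⟨0, by omega⟩, ⟨1, by omega⟩}ᶜ := by
  ext x
  simp [Fin.ext_iff]
  omega

theorem projHat_smul_psi_add_smul_sum_psi (hN : 2 ≤ N) (α β : ℂ) :
    projHat N k hN (α • (psi N k ⟨0, by omega⟩ + psi N k ⟨1, by omega⟩) +
        β • ∑ x ∈ Finset.univ.filter (fun x : Fin N => 2 ≤ (x : ℕ)), psi N k x)
      = WithLp.toLp 2 (fun z => if z.val ⟨0, by omega⟩ = true ∧ z.val ⟨1, by omega⟩ = true then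
          (2 * α + ((k : ℂ) - 2) * β) * ((√((N - 1).choose (k - 1)))⁻¹ : ℝ) else 0) := by
  ext z
  simp only [projHat]
  split_ifs with hz
  · have hweight :
        #{x ∈ ({⟨0, by omega⟩, ⟨1, by omega⟩} : Finset (Fin N))ᶜ | z.1 x = true} + 2 = k := by
      rw [← card_pair_zero_one hN]
      exact (card_filter_compl_add_card_of_forall_true (by simpa using hz)).trans z.2
    have hcount : (#{x ∈ {x : Fin N | 2 ≤ (x : ℕ)} | z.1 x = true} : ℂ) = k - 2 := by
      rw [filter_two_le_eq_compl_pair hN, eq_sub_iff_add_eq]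
      exact_mod_cast hweight
    simp only [PiLp.add_apply, PiLp.smul_apply, smul_eq_mul, sum_psi_apply, hcount]
    simp only [psi, hz, ↓reduceIte, Complex.ofReal_inv]
    ring
  · rfl

theorem card_dSet_filter_zero_one (hN : 2 ≤ N) (hk : 2 ≤ k) :
    #{z : DSet N k | z.1 ⟨0, by omega⟩ = true ∧ z.1 ⟨1, by omega⟩ = true}
      = (N - 2).choose (k - 2) := by
  have hpair := card_pair_zero_one hN
  have hcount := card_weight_filter_forall_true _ (hpair ▸ hk)
  rw [hpair, Fintype.card_fin] at hcount
  simpa using hcount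

end Psi

theorem stmt17 (N k : ℕ) (hk2 : 2 ≤ k) (hkN : k ≤ N) (α β : ℂ) :
    ‖projHat N k (by omega)
        (α • (psi N k ⟨0, by omega⟩ + psi N k ⟨1, by omega⟩) +
          β • ∑ x ∈ Finset.univ.filter (fun x : Fin N => 2 ≤ (x : ℕ)), psi N k x)‖ ^ 2
      = ((k : ℝ) - 1) / ((N : ℝ) - 1) *
          ‖2 * α + ((((k : ℝ) - 2) : ℝ) : ℂ) * β‖ ^ 2 := by
  rw [projHat_smul_psi_add_smul_sum_psi, EuclideanSpace.norm_sq_toLp_ite,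
    card_dSet_filter_zero_one (by omega) hk2]
  obtain ⟨n, rfl⟩ : ∃ n, N = n + 2 := ⟨N - 2, by omega⟩
  obtain ⟨r, rfl⟩ : ∃ r, k = r + 2 := ⟨k - 2, by omega⟩
  have hratio := Nat.cast_choose_div_choose_add_one (show r ≤ n by omega)
  have hr : ((r + 2 : ℕ) : ℝ) - 1 = r + 1 := by push_cast; ring
  have hn : ((n + 2 : ℕ) : ℝ) - 1 = n + 1 := by push_cast; ring
  rw [show n + 2 - 2 = n by omega, show r + 2 - 2 = r by omega, show n + 2 - 1 = n + 1 by omega,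
    show r + 2 - 1 = r + 1 by omega, hr, hn, ← hratio, norm_mul, Complex.norm_real, norm_inv,
    Real.norm_of_nonneg (Real.sqrt_nonneg _), mul_pow, inv_pow, Real.sq_sqrt (Nat.cast_nonneg _)]
  push_cast
  ring
end
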